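/- Let 1 ≤ p1, p2 < ∞, 1/p = 1/p1 + 1/p2, let w1, w2 be weights on ℝⁿ, and set w := w1^{p/p1}·w2^{p/p2}. Assume there exist constants c, C > 0 such that c·w(Q)^{1/p} ≤ w1(Q)^{1/p1}·w2(Q)^{1/p2} ≤ C·w(Q)^{1/p} for every cube Q ⊆ ℝⁿ. If there exists C' > 0 such that ‖M⊗(f,g)‖_{L^{p,∞}(w)} ≤ C' ‖f‖_{L^{p1,1}(w1)} ‖g‖_{L^{p2,1}(w2)} for all measurable functions f, g, then w1 ∈ A_{p1}^𝓡 and w2 ∈ A_{p2}^𝓡. -/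

import Mathlib

open MeasureTheory ENNReal Set

noncomputable section

/-- Euclidean space ℝⁿ. -/
abbrev Rn (n : ℕ) := EuclideanSpace ℝ (Fin n)

/-- An axis-parallel cube in ℝⁿ. -/
def IsCube {n : ℕ} (Q : Set (Rn n)) : Prop :=
  ∃ (c : Rn n) (r : ℝ), 0 < r ∧ Q = {x : Rn n | ∀ i, |x i - c i| ≤ r}

/-- A weight: a positive locally integrable function. -/
def IsWeight {n : ℕ} (w : Rn n → ℝ) : Prop :=
  (∀ x, 0 < w x) ∧ MeasureTheory.LocallyIntegrable w volume

/-- v(F) = ∫_F v. -/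
def wSet {n : ℕ} (v : Rn n → ℝ) (F : Set (Rn n)) : ℝ≥0∞ :=
  ∫⁻ x in F, ENNReal.ofReal (v x)

/-- Distribution function of an ℝ≥0∞-valued function w.r.t. the weight v. -/
def distrib {n : ℕ} (v : Rn n → ℝ) (f : Rn n → ℝ≥0∞) (t : ℝ) : ℝ≥0∞ :=
  wSet v {x | ENNReal.ofReal t < f x}

/-- Weak Lorentz quasinorm ‖f‖_{L^{p,∞}(v)} = sup_{y>0} y · v({f > y})^{1/p}. -/
def wLpInfty {n : ℕ} (p : ℝ) (v : Rn n → ℝ) (f : Rn n → ℝ≥0∞) : ℝ≥0∞ :=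
  ⨆ (y : ℝ) (_ : 0 < y), ENNReal.ofReal y * (distrib v f y) ^ (1 / p)

/-- Lorentz norm ‖f‖_{L^{p,1}(v)} = p ∫₀^∞ v({f > y})^{1/p} dy. -/
def wLp1 {n : ℕ} (p : ℝ) (v : Rn n → ℝ) (f : Rn n → ℝ≥0∞) : ℝ≥0∞ :=
  ENNReal.ofReal p * ∫⁻ y in Set.Ioi (0 : ℝ), (distrib v f y) ^ (1 / p)

/-- Lebesgue norm ‖f‖_{L^p(v)} = (∫ f^p v)^{1/p}. -/
def wLp {n : ℕ} (p : ℝ) (v : Rn n → ℝ) (f : Rn n → ℝ≥0∞) : ℝ≥0∞ :=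
  (∫⁻ x, (f x) ^ p * ENNReal.ofReal (v x)) ^ (1 / p)

/-- ‖f‖_{L^∞(v)}: essential supremum with respect to the measure with density v. -/
def wLinfty {n : ℕ} (v : Rn n → ℝ) (f : Rn n → ℝ≥0∞) : ℝ≥0∞ :=
  essSup f (volume.withDensity fun x => ENNReal.ofReal (v x))

/-- |f| as an ℝ≥0∞-valued function. -/
def ennAbs {n : ℕ} (f : Rn n → ℝ) : Rn n → ℝ≥0∞ := fun x => ENNReal.ofReal |f x|

/-- The Hardy–Littlewood maximal operator over cubes. -/
def maximal {n : ℕ} (f : Rn n → ℝ) (x : Rn n) : ℝ≥0∞ :=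
  ⨆ (Q : Set (Rn n)) (_ : IsCube Q) (_ : x ∈ Q),
    (volume Q)⁻¹ * ∫⁻ y in Q, ENNReal.ofReal |f y|

/-- The 2-fold product of Hardy–Littlewood maximal operators. -/
def Mprod {n : ℕ} (f g : Rn n → ℝ) (x : Rn n) : ℝ≥0∞ :=
  maximal f x * maximal g x

/-- The Muckenhoupt A_p constant, 1 < p. -/
def ApConst {n : ℕ} (p : ℝ) (v : Rn n → ℝ) : ℝ≥0∞ :=
  ⨆ (Q : Set (Rn n)) (_ : IsCube Q),
    ((volume Q)⁻¹ * ∫⁻ x in Q, ENNReal.ofReal (v x)) *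
      ((volume Q)⁻¹ * ∫⁻ x in Q, ENNReal.ofReal (v x ^ (1 - p / (p - 1)))) ^ (p - 1)

/-- The Muckenhoupt A₁ condition: Mv ≤ C v a.e. -/
def MemA1 {n : ℕ} (v : Rn n → ℝ) : Prop :=
  ∃ C : ℝ, ∀ᵐ x ∂(volume : Measure (Rn n)), maximal v x ≤ ENNReal.ofReal (C * v x)

/-- Membership in the Muckenhoupt class A_p, 1 ≤ p < ∞. -/
def MemAp {n : ℕ} (p : ℝ) (v : Rn n → ℝ) : Prop :=
  (p = 1 ∧ MemA1 v) ∨ (1 < p ∧ ApConst p v ≠ ∞)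

/-- Membership in A_∞ = ∪_{p ≥ 1} A_p. -/
def MemAinfty {n : ℕ} (v : Rn n → ℝ) : Prop :=
  ∃ p : ℝ, 1 ≤ p ∧ MemAp p v

/-- The A_p^𝓡 constant: sup_Q v(Q)^{1/p} ‖χ_Q v⁻¹‖_{L^{p',∞}(v)} / |Q|, with p' = ∞ if p = 1. -/
def AprConst {n : ℕ} (p : ℝ) (v : Rn n → ℝ) : ℝ≥0∞ :=
  ⨆ (Q : Set (Rn n)) (_ : IsCube Q),
    (wSet v Q) ^ (1 / p) *
      (if p = 1 then wLinfty v (Q.indicator fun y => ENNReal.ofReal (v y)⁻¹)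
        else wLpInfty (p / (p - 1)) v (Q.indicator fun y => ENNReal.ofReal (v y)⁻¹)) /
      volume Q

/-- Membership in the restricted weak type class A_p^𝓡. -/
def MemApR {n : ℕ} (p : ℝ) (v : Rn n → ℝ) : Prop :=
  AprConst p v ≠ ∞

/-- The bilinear Hardy–Littlewood maximal operator of Calderón. -/
def bilinearM {n : ℕ} (f g : Rn n → ℝ) (x : Rn n) : ℝ≥0∞ :=
  ⨆ (r : ℝ) (_ : 0 < r),
    (volume (Metric.ball (0 : Rn n) r))⁻¹ *
      ∫⁻ y in Metric.ball (0 : Rn n) r, ENNReal.ofReal (|f (x - y)| * |g (x + y)|)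

end

/-!
Test the restricted weak-type bound on `f = χ_S`, `g = χ_Q` for measurable `S ⊆ Q`: on `Q` the
product `M⊗(f, g)` is at least `|S| / |Q|`, so the bound and the upper comparability of the cube
weights give, after cancelling `w₂(Q)^{1/p₂}`, the restricted condition
`|S| / |Q| ≤ K (w₁(S) / w₁(Q))^{1/p₁}`. On the level sets `S = Q ∩ {w₁⁻¹ > t}` one has
`t w₁(S) ≤ |S|`, and the condition becomes `t w₁(S)^{1/p₁'} w₁(Q)^{1/p₁} ≤ K |Q|`, which is the
`A_{p₁}^𝓡` bound. The roles of the two weights are symmetric.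
-/

namespace IsCube

variable {n : ℕ} {Q : Set (Rn n)}

lemma eq_preimage_closedBall (hQ : IsCube Q) :
    ∃ (c : Fin n → ℝ) (r : ℝ), 0 < r ∧
      Q = EuclideanSpace.equiv (Fin n) ℝ ⁻¹' Metric.closedBall c r := by
  obtain ⟨c, r, hr, rfl⟩ := hQ
  refine ⟨EuclideanSpace.equiv (Fin n) ℝ c, r, hr, ?_⟩
  ext x
  simp [dist_pi_le_iff hr.le, Real.dist_eq]

lemma isCompact (hQ : IsCube Q) : IsCompact Q := by
  obtain ⟨c, r, -, rfl⟩ := hQ.eq_preimage_closedBall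
  exact (EuclideanSpace.equiv (Fin n) ℝ).toHomeomorph.isCompact_preimage.2
    (isCompact_closedBall c r)

lemma measurableSet (hQ : IsCube Q) : MeasurableSet Q :=
  hQ.isCompact.isClosed.measurableSet

lemma volume_ne_top (hQ : IsCube Q) : volume Q ≠ ∞ :=
  hQ.isCompact.measure_lt_top.ne

lemma volume_pos (hQ : IsCube Q) : 0 < volume Q := by
  obtain ⟨c, r, hr, rfl⟩ := hQ.eq_preimage_closedBall
  set e := EuclideanSpace.equiv (Fin n) ℝ
  have hball : IsOpen (e ⁻¹' Metric.ball c r) := Metric.isOpen_ball.preimage e.continuous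
  exact (hball.measure_pos volume ⟨e.symm c, by simpa using hr⟩).trans_le
    (measure_mono (preimage_mono Metric.ball_subset_closedBall))

end IsCube

namespace IsWeight

variable {n : ℕ} {v : Rn n → ℝ} {E : Set (Rn n)}

lemma wSet_ne_top (hv : IsWeight v) (hE : IsCompact E) : wSet v E ≠ ∞ :=
  (hv.2.integrableOn_isCompact hE).lintegral_lt_top.ne

lemma wSet_pos (hv : IsWeight v) (hE : volume E ≠ 0) : 0 < wSet v E := by
  have hf : AEMeasurable (fun x => ENNReal.ofReal (v x)) (volume.restrict E) :=
    hv.2.aestronglyMeasurable.aemeasurable.ennreal_ofReal.restrict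
  rw [pos_iff_ne_zero, wSet, Ne, lintegral_eq_zero_iff' hf]
  intro h
  have hfalse : ∀ᵐ x ∂(volume.restrict E), False :=
    h.mono fun x hx => (ENNReal.ofReal_pos.2 (hv.1 x)).ne' hx
  exact hE <| Measure.restrict_eq_zero.1 <| ae_eq_bot.1 <|
    Filter.eventually_false_iff_eq_bot.1 hfalse

end IsWeight

lemma wSet_le_ofReal_mul_volume {n : ℕ} {v : Rn n → ℝ} {E : Set (Rn n)} {c : ℝ}
    (h : ∀ x ∈ E, v x ≤ c) : wSet v E ≤ ENNReal.ofReal c * volume E := by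
  calc wSet v E ≤ ∫⁻ _ in E, ENNReal.ofReal c :=
        setLIntegral_mono_ae aemeasurable_const
          (Filter.Eventually.of_forall fun x hx => ENNReal.ofReal_le_ofReal (h x hx))
    _ = ENNReal.ofReal c * volume E := setLIntegral_const E _

lemma wLp1_indicator_one {n : ℕ} {q : ℝ} (hq : 0 < q) (v : Rn n → ℝ) (S : Set (Rn n)) :
    wLp1 q v (ennAbs (S.indicator 1)) = ENNReal.ofReal q * wSet v S ^ (1 / q) := by
  have hdistrib : ∀ y ∈ Ioi (0 : ℝ), distrib v (ennAbs (S.indicator 1)) y ^ (1 / q) =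
      (Iio 1).indicator (fun _ => wSet v S ^ (1 / q)) y := by
    intro y hy
    have hlevel : {x | ENNReal.ofReal y < ennAbs (S.indicator 1) x} = if y < 1 then S else ∅ := by
      ext x
      by_cases hx : x ∈ S <;> split_ifs <;> simp_all [ennAbs, ENNReal.ofReal_lt_one]
    by_cases hy1 : y < 1
    · rw [distrib, hlevel, if_pos hy1, indicator_of_mem (mem_Iio.2 hy1)]
    · rw [distrib, hlevel, if_neg hy1, indicator_of_notMem (notMem_Iio.2 (not_lt.1 hy1)), wSet,
        Measure.restrict_empty, lintegral_zero_measure, ENNReal.zero_rpow_of_pos (one_div_pos.2 hq)]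
  rw [wLp1, setLIntegral_congr_fun measurableSet_Ioi hdistrib,
    lintegral_indicator measurableSet_Iio, Measure.restrict_restrict measurableSet_Iio,
    setLIntegral_const, Iio_inter_Ioi, Real.volume_Ioo]
  simp

section

variable {n : ℕ} {Q S : Set (Rn n)} {x : Rn n}

lemma div_le_maximal_indicator_one (hQ : IsCube Q) (hS : MeasurableSet S) (hSQ : S ⊆ Q)
    (hx : x ∈ Q) : volume S / volume Q ≤ maximal (S.indicator 1) x := by
  have hint : ∫⁻ y in Q, ENNReal.ofReal |S.indicator 1 y| = volume S := by
    have habs : (fun y => ENNReal.ofReal |S.indicator (1 : Rn n → ℝ) y|) = S.indicator 1 := by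
      ext y
      by_cases hy : y ∈ S <;> simp [hy]
    rw [habs, lintegral_indicator_one hS, Measure.restrict_apply hS, inter_eq_left.2 hSQ]
  rw [ENNReal.div_eq_inv_mul, ← hint]
  exact le_iSup₂_of_le Q hQ (le_iSup_of_le hx le_rfl)

lemma div_le_Mprod_indicator_one (hQ : IsCube Q) (hS : MeasurableSet S) (hSQ : S ⊆ Q)
    (hx : x ∈ Q) : volume S / volume Q ≤ Mprod (S.indicator 1) (Q.indicator 1) x := by
  have hone : 1 ≤ maximal (Q.indicator 1) x := by
    simpa [ENNReal.div_self hQ.volume_pos.ne' hQ.volume_ne_top] using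
      div_le_maximal_indicator_one hQ hQ.measurableSet subset_rfl hx
  simpa [Mprod] using mul_le_mul' (div_le_maximal_indicator_one hQ hS hSQ hx) hone

end

lemma mul_rpow_wSet_le_wLpInfty {n : ℕ} {p : ℝ} (hp : 0 < p) {v : Rn n → ℝ}
    {F : Rn n → ℝ≥0∞} {E : Set (Rn n)} {m : ℝ≥0∞} (hF : ∀ x ∈ E, m ≤ F x) :
    m * wSet v E ^ (1 / p) ≤ wLpInfty p v F := by
  refine ENNReal.mul_le_of_forall_lt fun a ha b hb => ?_
  rcases eq_or_ne a 0 with rfl | ha0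
  · simp
  have ha_top : a ≠ ∞ := (ha.trans_le le_top).ne
  have hE : E ⊆ {x | ENNReal.ofReal a.toReal < F x} := fun x hx => by
    rw [ENNReal.ofReal_toReal ha_top]
    exact ha.trans_le (hF x hx)
  calc a * b ≤ ENNReal.ofReal a.toReal * distrib v F a.toReal ^ (1 / p) := by
        rw [ENNReal.ofReal_toReal ha_top]
        gcongr
        exact hb.le.trans (ENNReal.rpow_le_rpow (lintegral_mono_set hE) (by positivity))
    _ ≤ wLpInfty p v F := le_iSup₂_of_le a.toReal (ENNReal.toReal_pos ha0 ha_top) le_rfl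

lemma distrib_indicator_inv {n : ℕ} {v : Rn n → ℝ} (hv : ∀ x, 0 < v x) (Q : Set (Rn n))
    (t : ℝ) :
    distrib v (Q.indicator fun y => ENNReal.ofReal (v y)⁻¹) t =
      wSet v (Q ∩ {x | t < (v x)⁻¹}) := by
  rw [distrib]
  congr 1
  ext x
  by_cases hx : x ∈ Q
  · simp only [mem_ofPred_eq, mem_inter_iff, indicator_of_mem hx, hx, true_and,
      ENNReal.ofReal_lt_ofReal_iff (inv_pos.2 (hv x))]
  · simp [hx]

def HasRestrictedApBound {n : ℕ} (q : ℝ) (K : ℝ≥0∞) (v : Rn n → ℝ) : Prop :=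
  ∀ Q : Set (Rn n), IsCube Q → ∀ S : Set (Rn n), MeasurableSet S → S ⊆ Q →
    volume S / volume Q * wSet v Q ^ (1 / q) ≤ K * wSet v S ^ (1 / q)

lemma hasRestrictedApBound_of_Mprod_le {n : ℕ} {p pa pb : ℝ} (hp : 0 < p) (hpa : 0 < pa)
    (hpb : 0 < pb) {v u w : Rn n → ℝ} (hu : IsWeight u) {C C' : ℝ≥0∞}
    (hcmp : ∀ Q : Set (Rn n), IsCube Q →
      wSet v Q ^ (1 / pa) * wSet u Q ^ (1 / pb) ≤ C * wSet w Q ^ (1 / p))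
    (hb : ∀ f g : Rn n → ℝ, Measurable f → Measurable g →
      wLpInfty p w (Mprod f g) ≤ C' * wLp1 pa v (ennAbs f) * wLp1 pb u (ennAbs g)) :
    HasRestrictedApBound pa (C * C' * ENNReal.ofReal pa * ENNReal.ofReal pb) v := by
  intro Q hQ S hS hSQ
  set B := wSet u Q ^ (1 / pb)
  have huQ : wSet u Q ≠ ∞ := hu.wSet_ne_top hQ.isCompact
  have hB0 : B ≠ 0 := (ENNReal.rpow_pos (hu.wSet_pos hQ.volume_pos.ne') huQ).ne'
  have hBtop : B ≠ ∞ := ENNReal.rpow_ne_top_of_nonneg (by positivity) huQ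
  have hweak : volume S / volume Q * wSet w Q ^ (1 / p) ≤
      C' * (ENNReal.ofReal pa * wSet v S ^ (1 / pa)) * (ENNReal.ofReal pb * B) := by
    rw [← wLp1_indicator_one hpa, ← wLp1_indicator_one hpb]
    exact (mul_rpow_wSet_le_wLpInfty hp fun x hx => div_le_Mprod_indicator_one hQ hS hSQ hx).trans
      (hb _ _ (measurable_one.indicator hS) (measurable_one.indicator hQ.measurableSet))
  rw [← ENNReal.mul_le_mul_iff_left hB0 hBtop]
  calc volume S / volume Q * wSet v Q ^ (1 / pa) * B
      = volume S / volume Q * (wSet v Q ^ (1 / pa) * B) := by ring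
    _ ≤ volume S / volume Q * (C * wSet w Q ^ (1 / p)) := mul_le_mul' le_rfl (hcmp Q hQ)
    _ = C * (volume S / volume Q * wSet w Q ^ (1 / p)) := by ring
    _ ≤ C * (C' * (ENNReal.ofReal pa * wSet v S ^ (1 / pa)) * (ENNReal.ofReal pb * B)) := by
        gcongr
    _ = C * C' * ENNReal.ofReal pa * ENNReal.ofReal pb * wSet v S ^ (1 / pa) * B := by ring

namespace HasRestrictedApBound

variable {n : ℕ} {q : ℝ} {K : ℝ≥0∞} {v : Rn n → ℝ} {Q : Set (Rn n)}

lemma of_nullMeasurableSet (h : HasRestrictedApBound q K v) (hQ : IsCube Q) {S : Set (Rn n)}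
    (hS : NullMeasurableSet S) (hSQ : S ⊆ Q) :
    volume S / volume Q * wSet v Q ^ (1 / q) ≤ K * wSet v S ^ (1 / q) := by
  obtain ⟨S', hS'S, hS', hae⟩ := hS.exists_measurable_subset_ae_eq
  have hwSet : wSet v S' = wSet v S := by rw [wSet, wSet, Measure.restrict_congr_set hae]
  rw [← measure_congr hae, ← hwSet]
  exact h Q hQ S' hS' (hS'S.trans hSQ)

lemma ofReal_mul_rpow_le (h : HasRestrictedApBound q K v) (hv : IsWeight v) (hQ : IsCube Q)
    {t : ℝ} (ht : 0 < t) (hT : wSet v (Q ∩ {x | t < (v x)⁻¹}) ≠ 0) :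
    ENNReal.ofReal t * wSet v (Q ∩ {x | t < (v x)⁻¹}) ^ (1 - 1 / q) * wSet v Q ^ (1 / q) ≤
      K * volume Q := by
  set T := Q ∩ {x | t < (v x)⁻¹}
  set A := wSet v T
  have hAtop : A ≠ ∞ :=
    ne_top_of_le_ne_top (hv.wSet_ne_top hQ.isCompact) (lintegral_mono_set inter_subset_left)
  have hTnull : NullMeasurableSet T :=
    hQ.measurableSet.nullMeasurableSet.inter
      (nullMeasurableSet_lt aemeasurable_const hv.2.aestronglyMeasurable.aemeasurable.inv)
  have hChebyshev : ENNReal.ofReal t * A ≤ volume T := by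
    have hvT : ∀ x ∈ T, v x ≤ 1 / t := fun x hx => by
      rw [one_div]
      exact (lt_inv_comm₀ ht (hv.1 x)).1 hx.2 |>.le
    calc ENNReal.ofReal t * A ≤ ENNReal.ofReal t * (ENNReal.ofReal (1 / t) * volume T) := by
          gcongr; exact wSet_le_ofReal_mul_volume hvT
      _ = volume T := by
          rw [← mul_assoc, ← ENNReal.ofReal_mul ht.le, mul_one_div_cancel ht.ne',
            ENNReal.ofReal_one, one_mul]
  have hsplit : A = A ^ (1 - 1 / q) * A ^ (1 / q) := by
    rw [← ENNReal.rpow_add _ _ hT hAtop, sub_add_cancel, ENNReal.rpow_one]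
  rw [← ENNReal.mul_le_mul_iff_left (ENNReal.rpow_pos (pos_iff_ne_zero.2 hT) hAtop).ne'
    (ENNReal.rpow_ne_top_of_ne_zero hT hAtop)]
  calc ENNReal.ofReal t * A ^ (1 - 1 / q) * wSet v Q ^ (1 / q) * A ^ (1 / q)
      = ENNReal.ofReal t * A * wSet v Q ^ (1 / q) := by
        rw [mul_right_comm, mul_assoc (ENNReal.ofReal t), ← hsplit]
    _ ≤ volume T * wSet v Q ^ (1 / q) := by gcongr
    _ = volume T / volume Q * wSet v Q ^ (1 / q) * volume Q := by
        rw [mul_right_comm, ENNReal.div_mul_cancel hQ.volume_pos.ne' hQ.volume_ne_top]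
    _ ≤ K * A ^ (1 / q) * volume Q :=
        mul_le_mul' (h.of_nullMeasurableSet hQ hTnull inter_subset_left) le_rfl
    _ = K * volume Q * A ^ (1 / q) := by ring

lemma wSet_mul_wLinfty_div_le (h : HasRestrictedApBound 1 K v) (hv : IsWeight v)
    (hQ : IsCube Q) :
    wSet v Q * wLinfty v (Q.indicator fun y => ENNReal.ofReal (v y)⁻¹) / volume Q ≤ K := by
  set W := wSet v Q
  have hW0 : W ≠ 0 := (hv.wSet_pos hQ.volume_pos.ne').ne'
  have hWtop : W ≠ ∞ := hv.wSet_ne_top hQ.isCompact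
  refine ENNReal.div_le_of_le_mul ?_
  rw [mul_comm W, ← ENNReal.le_div_iff_mul_le (Or.inl hW0) (Or.inl hWtop)]
  -- every level set of `v⁻¹` on `Q` above `K |Q| / v(Q)` is `v`-null
  refine le_of_forall_gt_imp_ge_of_dense fun c hc => ?_
  rcases eq_or_ne c ∞ with rfl | hctop
  · exact le_top
  have ht : 0 < c.toReal := ENNReal.toReal_pos (zero_le.trans_lt hc).ne' hctop
  refine essSup_le_of_ae_le c ?_
  rw [Filter.EventuallyLE, ae_iff, withDensity_apply']
  by_contra hT
  have hT' : wSet v (Q ∩ {x | c.toReal < (v x)⁻¹}) ≠ 0 := by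
    rw [← distrib_indicator_inv hv.1, distrib, ENNReal.ofReal_toReal hctop]
    simpa only [wSet, not_le] using hT
  have hbound := h.ofReal_mul_rpow_le hv hQ ht hT'
  rw [ENNReal.ofReal_toReal hctop] at hbound
  simp only [div_one, sub_self, ENNReal.rpow_zero, mul_one, ENNReal.rpow_one] at hbound
  exact ((ENNReal.div_lt_iff (Or.inl hW0) (Or.inl hWtop)).1 hc).not_ge hbound

lemma rpow_mul_wLpInfty_div_le (h : HasRestrictedApBound q K v) (hv : IsWeight v) (hq : 1 < q)
    (hQ : IsCube Q) :
    wSet v Q ^ (1 / q) * wLpInfty (q / (q - 1)) v (Q.indicator fun y => ENNReal.ofReal (v y)⁻¹) /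
      volume Q ≤ K := by
  have hexp : 1 / (q / (q - 1)) = 1 - 1 / q := by field_simp
  have hexp_pos : 0 < 1 - 1 / q := sub_pos.2 ((div_lt_one (by linarith)).2 hq)
  refine ENNReal.div_le_of_le_mul ?_
  simp only [wLpInfty, ENNReal.mul_iSup]
  refine iSup₂_le fun t ht => ?_
  rw [distrib_indicator_inv hv.1, hexp]
  rcases eq_or_ne (wSet v (Q ∩ {x | t < (v x)⁻¹})) 0 with hT | hT
  · rw [hT, ENNReal.zero_rpow_of_pos hexp_pos]
    simp
  · calc _ = ENNReal.ofReal t * wSet v (Q ∩ {x | t < (v x)⁻¹}) ^ (1 - 1 / q) *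
            wSet v Q ^ (1 / q) := by ring
      _ ≤ K * volume Q := h.ofReal_mul_rpow_le hv hQ ht hT

lemma aprConst_le (h : HasRestrictedApBound q K v) (hv : IsWeight v) (hq : 1 ≤ q) :
    AprConst q v ≤ K := by
  refine iSup₂_le fun Q hQ => ?_
  rcases hq.eq_or_lt with rfl | hq
  · simpa using h.wSet_mul_wLinfty_div_le hv hQ
  · rw [if_neg hq.ne']
    exact h.rpow_mul_wLpInfty_div_le hv hq hQ

lemma memApR (h : HasRestrictedApBound q K v) (hv : IsWeight v) (hq : 1 ≤ q) (hK : K ≠ ∞) :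
    MemApR q v :=
  ne_top_of_le_ne_top hK (h.aprConst_le hv hq)

end HasRestrictedApBound

lemma Mprod_comm {n : ℕ} (f g : Rn n → ℝ) : Mprod f g = Mprod g f :=
  funext fun _ => mul_comm _ _

theorem stmt_9_general {n : ℕ} (p p₁ p₂ : ℝ) (hp₁ : 1 ≤ p₁) (hp₂ : 1 ≤ p₂)
    (hp : 1 / p = 1 / p₁ + 1 / p₂)
    (w₁ w₂ : Rn n → ℝ) (hw₁ : IsWeight w₁) (hw₂ : IsWeight w₂)
    (w : Rn n → ℝ)
    (hcmp : ∃ c C : ℝ, 0 < c ∧ 0 < C ∧ ∀ Q : Set (Rn n), IsCube Q →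
      ENNReal.ofReal c * (wSet w Q) ^ (1 / p) ≤
          (wSet w₁ Q) ^ (1 / p₁) * (wSet w₂ Q) ^ (1 / p₂) ∧
        (wSet w₁ Q) ^ (1 / p₁) * (wSet w₂ Q) ^ (1 / p₂) ≤
          ENNReal.ofReal C * (wSet w Q) ^ (1 / p))
    (hbdd : ∃ C' : ℝ, 0 < C' ∧ ∀ f g : Rn n → ℝ, Measurable f → Measurable g →
      wLpInfty p w (Mprod f g) ≤
        ENNReal.ofReal C' * wLp1 p₁ w₁ (ennAbs f) * wLp1 p₂ w₂ (ennAbs g)) :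
    MemApR p₁ w₁ ∧ MemApR p₂ w₂ := by
  obtain ⟨_, C, -, -, hcmp⟩ := hcmp
  obtain ⟨C', -, hbdd⟩ := hbdd
  have hp₁0 : 0 < p₁ := by linarith
  have hp₂0 : 0 < p₂ := by linarith
  have hp0 : 0 < p := one_div_pos.1 (hp ▸ by positivity)
  have hcmp₂ : ∀ Q, IsCube Q → wSet w₂ Q ^ (1 / p₂) * wSet w₁ Q ^ (1 / p₁) ≤
      ENNReal.ofReal C * wSet w Q ^ (1 / p) := fun Q hQ => by
    rw [mul_comm]
    exact (hcmp Q hQ).2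
  have hbdd₂ : ∀ f g : Rn n → ℝ, Measurable f → Measurable g → wLpInfty p w (Mprod f g) ≤
      ENNReal.ofReal C' * wLp1 p₂ w₂ (ennAbs f) * wLp1 p₁ w₁ (ennAbs g) := fun f g hf hg => by
    rw [Mprod_comm, mul_right_comm]
    exact hbdd g f hg hf
  exact ⟨(hasRestrictedApBound_of_Mprod_le hp0 hp₁0 hp₂0 hw₂ (fun Q hQ => (hcmp Q hQ).2)
      hbdd).memApR hw₁ hp₁ (by finiteness),
    (hasRestrictedApBound_of_Mprod_le hp0 hp₂0 hp₁0 hw₁ hcmp₂ hbdd₂).memApR hw₂ hp₂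
      (by finiteness)⟩

/-- restricted weak boundedness of M⊗ implies wᵢ ∈ A_{pᵢ}^𝓡, assuming only
the comparability w₁(Q)^{1/p₁} w₂(Q)^{1/p₂} ≈ w(Q)^{1/p} on cubes. -/
theorem stmt_9 {n : ℕ} (p p₁ p₂ : ℝ) (hp₁ : 1 ≤ p₁) (hp₂ : 1 ≤ p₂)
    (hp : 1 / p = 1 / p₁ + 1 / p₂)
    (w₁ w₂ : Rn n → ℝ) (hw₁ : IsWeight w₁) (hw₂ : IsWeight w₂)
    (w : Rn n → ℝ) (hw : ∀ x, w x = w₁ x ^ (p / p₁) * w₂ x ^ (p / p₂))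
    (hcmp : ∃ c C : ℝ, 0 < c ∧ 0 < C ∧ ∀ Q : Set (Rn n), IsCube Q →
      ENNReal.ofReal c * (wSet w Q) ^ (1 / p) ≤
          (wSet w₁ Q) ^ (1 / p₁) * (wSet w₂ Q) ^ (1 / p₂) ∧
        (wSet w₁ Q) ^ (1 / p₁) * (wSet w₂ Q) ^ (1 / p₂) ≤
          ENNReal.ofReal C * (wSet w Q) ^ (1 / p))
    (hbdd : ∃ C' : ℝ, 0 < C' ∧ ∀ f g : Rn n → ℝ, Measurable f → Measurable g →
      wLpInfty p w (Mprod f g) ≤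
        ENNReal.ofReal C' * wLp1 p₁ w₁ (ennAbs f) * wLp1 p₂ w₂ (ennAbs g)) :
    MemApR p₁ w₁ ∧ MemApR p₂ w₂ :=
  stmt_9_general p p₁ p₂ hp₁ hp₂ hp w₁ w₂ hw₁ hw₂ w hcmp hbdd
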